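/- For the Z channel, i.e. p = 0 and 0 < q < 1, and any 0 < θ < 1, for all sufficiently large n (k = ⌈n^θ⌉ → ∞), the Bernoulli-design DD bound strictly dominates the constant-column DD bound: m_DD^Ber(n,θ,0,q) > m_DD(n,θ,0,q). -/

import Mathlib

open Real Set Filter

noncomputable section

/-- KL divergence between Bernoulli(r) and Bernoulli(s) (natural log, boundary by continuity). -/
def klBer (r s : ℝ) : ℝ := r * Real.log (r / s) + (1 - r) * Real.log ((1 - r) / (1 - s))

/-- Feasible values for the constant-column DD bound on the Z channel. -/
def ddSetZ (θ q : ℝ) : Set ℝ :=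
  {x | ∃ d α : ℝ, 0 < d ∧
    α ∈ Set.Ioo q (Real.exp (-d) + (1 - Real.exp (-d)) * q) ∧
    x = max (max (θ / (1 - θ) * (1 / (d * klBer α q)))
        (1 / (d * klBer α (Real.exp (-d) + (1 - Real.exp (-d)) * q))))
      (θ / (1 - θ) * (1 / (-d * Real.log (1 - Real.exp (-d) * (1 - q)))))}

/-- Feasible values for the Bernoulli-design DD bound on the Z channel
(the fourth bound of the general Bernoulli DD optimization vanishes when `p = 0`). -/
def ddSetZBer (θ q : ℝ) (k : ℕ) : Set ℝ :=
  {x | ∃ ζ d α β : ℝ, 0 < ζ ∧ ζ < θ ∧ 0 < d ∧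
    α ∈ Set.Ioo q (Real.exp (-d) + (1 - Real.exp (-d)) * q) ∧
    β ∈ Set.Ioo 0 (Real.exp (-d) * (1 - q)) ∧
    x = max (max (θ / (1 - θ) * (1 / (k * klBer (α * d / k) (q * d / k))))
        ((1 - ζ) / (1 - θ) *
          (1 / (k * klBer (α * d / k) ((Real.exp (-d) + (1 - Real.exp (-d)) * q) * d / k)))))
      (θ / (1 - θ) * (1 / (k * klBer (β * d / k) (Real.exp (-d) * (1 - q) * d / k))))}

/-- `m_DD(n,θ,0,q)` for `k = ⌈n^θ⌉` (constant-column design, Z channel). -/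
def mDDZ (n : ℕ) (θ q : ℝ) : ℝ :=
  sInf (ddSetZ θ q) *
    ((⌈(n : ℝ) ^ θ⌉₊ : ℝ) * Real.log (n / (⌈(n : ℝ) ^ θ⌉₊ : ℝ)))

/-- `m_DD^Ber(n,θ,0,q)` for `k = ⌈n^θ⌉` (Bernoulli design, Z channel). -/
def mDDZBer (n : ℕ) (θ q : ℝ) : ℝ :=
  sInf (ddSetZBer θ q ⌈(n : ℝ) ^ θ⌉₊) *
    ((⌈(n : ℝ) ^ θ⌉₊ : ℝ) * Real.log (n / (⌈(n : ℝ) ^ θ⌉₊ : ℝ)))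


open InformationTheory

/-!
Put `t = d / k`. A Bernoulli-design denominator is `k * klBer (α * t) (s * t)`, its constant-column
counterpart `d * klBer α s`; for the third term, with `c = exp (-d) * (1 - q)`, one first lowers `β`
to `0` and uses `-d * log (1 - c) = d * klBer 0 c`. Splitting
`klBer r s = s * klFun (r / s) + (1 - s) * klFun ((1 - r) / (1 - s))`, the first part gets multiplied
by exactly `t` under `(r, s) ↦ (r * t, s * t)` while the second is `O(t²)`, so for `t ≤ 1 / 8` the
Bernoulli denominator is smaller by the factor `1 - s * (1 - s) / 4`.

If `d * exp (-d)` is bounded below by some `B`, then `d` is bounded, hence `t → 0` uniformly, and all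
three `s * (1 - s)` are bounded below: each Bernoulli term beats the matching constant-column term
by a fixed factor. If `d * exp (-d) ≤ B`, the third Bernoulli term alone exceeds any prescribed
feasible constant-column value once `B` is small.
-/

lemma klFun_le_sq {x : ℝ} (hx : 0 ≤ x) : klFun x ≤ (x - 1) ^ 2 := by
  have h : x * log x ≤ x * (x - 1) := by
    rcases hx.eq_or_lt with rfl | hx
    · simp
    · exact mul_le_mul_of_nonneg_left (log_le_sub_one_of_pos hx) hx.le
  rw [klFun_apply]
  nlinarith

lemma sq_div_two_le_klFun {x : ℝ} (hx0 : 0 ≤ x) (hx1 : x ≤ 1) : (x - 1) ^ 2 / 2 ≤ klFun x := by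
  rcases hx0.eq_or_lt with rfl | hx0
  · norm_num [klFun_zero]
  have h : (x - x⁻¹) / 2 ≤ log x := by
    rw [← sinh_log hx0]
    exact sinh_le_self_iff.2 (log_nonpos hx0.le hx1)
  have hx : x * ((x - x⁻¹) / 2) = (x ^ 2 - 1) / 2 := by field_simp
  rw [klFun_apply]
  nlinarith [mul_le_mul_of_nonneg_left h hx0.le]

lemma sq_div_two_mul_le_klFun {x : ℝ} (hx : 1 ≤ x) : (x - 1) ^ 2 / (2 * x) ≤ klFun x := by
  have hx0 : 0 < x := one_pos.trans_le hx
  set w := 1 - x⁻¹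
  have hw0 : 0 ≤ w := sub_nonneg.2 (inv_le_one_of_one_le₀ hx)
  have hw1 : |w| < 1 := by
    rw [abs_of_nonneg hw0]
    exact sub_lt_self 1 (inv_pos.2 hx0)
  -- the first two terms of `-log (1 - w) = ∑ wⁿ⁺¹ / (n + 1)`
  have hlog : w + w ^ 2 / 2 ≤ log x := by
    have h := sum_le_hasSum (Finset.range 2) (fun i _ => by positivity)
      (hasSum_pow_div_log_of_abs_lt_one hw1)
    rw [sub_sub_cancel, log_inv, neg_neg] at h
    norm_num [Finset.sum_range_succ] at h
    linarith
  have hxw : x * (w + w ^ 2 / 2) = x - 1 + (x - 1) ^ 2 / (2 * x) := by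
    simp only [w]; field_simp
  rw [klFun_apply]
  nlinarith [mul_le_mul_of_nonneg_left hlog hx0.le]

lemma mul_klFun_div_le {a b : ℝ} (ha : 0 ≤ a) (hb : 0 < b) :
    b * klFun (a / b) ≤ (a - b) ^ 2 / b := by
  calc b * klFun (a / b) ≤ b * (a / b - 1) ^ 2 :=
        mul_le_mul_of_nonneg_left (klFun_le_sq (by positivity)) hb.le
    _ = (a - b) ^ 2 / b := by field_simp

lemma sq_div_two_le_mul_klFun_div {a b : ℝ} (ha0 : 0 ≤ a) (ha1 : a ≤ 1) (hb0 : 0 < b)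
    (hb1 : b ≤ 1) : (a - b) ^ 2 / 2 ≤ b * klFun (a / b) := by
  rcases le_total a b with hab | hab
  · have h := mul_le_mul_of_nonneg_left
      (sq_div_two_le_klFun (div_nonneg ha0 hb0.le) ((div_le_one hb0).2 hab)) hb0.le
    have e : b * ((a / b - 1) ^ 2 / 2) = (a - b) ^ 2 / (2 * b) := by field_simp
    rw [e] at h
    refine le_trans ?_ h
    gcongr
    linarith
  · have ha : 0 < a := hb0.trans_le hab
    have h := mul_le_mul_of_nonneg_left (sq_div_two_mul_le_klFun ((one_le_div hb0).2 hab)) hb0.le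
    have e : b * ((a / b - 1) ^ 2 / (2 * (a / b))) = (a - b) ^ 2 / (2 * a) := by field_simp
    rw [e] at h
    refine le_trans ?_ h
    gcongr
    linarith

lemma klBer_eq_klFun {r s : ℝ} (hs0 : 0 < s) (hs1 : s < 1) :
    klBer r s = s * klFun (r / s) + (1 - s) * klFun ((1 - r) / (1 - s)) := by
  have : 1 - s ≠ 0 := by linarith
  simp only [klBer, klFun_apply]
  field_simp
  ring

lemma klBer_nonneg {r s : ℝ} (hr0 : 0 ≤ r) (hr1 : r ≤ 1) (hs0 : 0 < s) (hs1 : s < 1) :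
    0 ≤ klBer r s := by
  rw [klBer_eq_klFun hs0 hs1]
  have := klFun_nonneg (div_nonneg hr0 hs0.le)
  have := klFun_nonneg (div_nonneg (sub_nonneg.2 hr1) (sub_pos.2 hs1).le)
  have : 0 < 1 - s := by linarith
  positivity

lemma klBer_pos {r s : ℝ} (hr0 : 0 ≤ r) (hr1 : r ≤ 1) (hs0 : 0 < s) (hs1 : s < 1) (hrs : r ≠ s) :
    0 < klBer r s := by
  rw [klBer_eq_klFun hs0 hs1]
  have h1 := mul_nonneg hs0.le (klFun_nonneg (div_nonneg hr0 hs0.le))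
  have h2 := sq_div_two_le_mul_klFun_div (a := 1 - r) (b := 1 - s) (by linarith) (by linarith)
    (by linarith) (by linarith)
  have h3 : 0 < (1 - r - (1 - s)) ^ 2 := by
    have : 1 - r - (1 - s) ≠ 0 := by contrapose! hrs; linarith
    positivity
  linarith

lemma klBer_le_sq_div {r s : ℝ} (hr0 : 0 ≤ r) (hr1 : r ≤ 1) (hs0 : 0 < s) (hs1 : s < 1) :
    klBer r s ≤ (r - s) ^ 2 / (s * (1 - s)) := by
  have h1s : 0 < 1 - s := by linarith
  rw [klBer_eq_klFun hs0 hs1]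
  have h1 := mul_klFun_div_le hr0 hs0
  have h2 := mul_klFun_div_le (a := 1 - r) (by linarith) h1s
  have e : (r - s) ^ 2 / s + (1 - r - (1 - s)) ^ 2 / (1 - s) = (r - s) ^ 2 / (s * (1 - s)) := by
    field_simp; ring
  linarith

lemma klBer_mul_le {α s t : ℝ} (hα0 : 0 ≤ α) (hα1 : α < 1) (hs0 : 0 < s) (hs1 : s < 1)
    (ht0 : 0 < t) (ht : t ≤ 1 / 8) :
    klBer (α * t) (s * t) ≤ (1 - s * (1 - s) / 4) * (t * klBer α s) := by
  have hst1 : s * t < 1 := by nlinarith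
  have hst : 7 / 8 ≤ 1 - s * t := by nlinarith
  have hpoisson : s * t * klFun (α * t / (s * t)) = t * (s * klFun (α / s)) := by
    rw [mul_div_mul_right _ _ ht0.ne']; ring
  have hsecond : (1 - s * t) * klFun ((1 - α * t) / (1 - s * t)) ≤ t * ((α - s) ^ 2 / 7) := by
    refine (mul_klFun_div_le (by nlinarith) (by linarith)).trans ?_
    rw [div_le_iff₀ (by linarith)]
    nlinarith [sq_nonneg (α - s)]
  have hfirst := sq_div_two_le_mul_klFun_div (a := 1 - α) (b := 1 - s) (by linarith)
    (by linarith) (by linarith) (by linarith)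
  have hchi := klBer_le_sq_div hα0 hα1.le hs0 hs1
  rw [le_div_iff₀ (by nlinarith)] at hchi
  rw [klBer_eq_klFun (mul_pos hs0 ht0) hst1, hpoisson]
  rw [klBer_eq_klFun hs0 hs1] at hchi ⊢
  nlinarith [mul_le_mul_of_nonneg_left hchi ht0.le]

lemma klBer_zero_left (s : ℝ) : klBer 0 s = -log (1 - s) := by
  simp [klBer, log_inv]

lemma klBer_le_klBer_zero {r s : ℝ} (hr0 : 0 < r) (hrs : r ≤ s) (hs1 : s < 1) :
    klBer r s ≤ klBer 0 s := by
  have hs0 : 0 < s := hr0.trans_le hrs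
  have h1r : 0 < 1 - r := by linarith
  have h1s : 0 < 1 - s := by linarith
  have e : klBer r s - klBer 0 s = r * log (r * (1 - s) / s) + (1 - r) * log (1 - r) := by
    rw [klBer_zero_left, klBer, log_div hr0.ne' hs0.ne', log_div h1r.ne' h1s.ne',
      log_div (by positivity) hs0.ne', log_mul hr0.ne' h1s.ne']
    ring
  have h1 : log (r * (1 - s) / s) ≤ 0 :=
    log_nonpos (by positivity) ((div_le_one hs0).2 (by nlinarith))
  have h2 : log (1 - r) ≤ 0 := log_nonpos h1r.le (by linarith)
  nlinarith [mul_nonpos_of_nonneg_of_nonpos hr0.le h1, mul_nonpos_of_nonneg_of_nonpos h1r.le h2]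

lemma neg_log_one_sub_le_div {x a : ℝ} (hx : 0 ≤ x) (ha : 0 < a) (hxa : x ≤ 1 - a) :
    -log (1 - x) ≤ x / a := by
  have h1x : 0 < 1 - x := by linarith
  have h := one_sub_inv_le_log_of_pos h1x
  have e : (1 - x)⁻¹ - 1 = x / (1 - x) := by field_simp; ring
  calc -log (1 - x) ≤ x / (1 - x) := by linarith
    _ ≤ x / a := div_le_div_of_nonneg_left hx ha (by linarith)

lemma mul_exp_neg_le_one (d : ℝ) : d * exp (-d) ≤ 1 :=
  (mul_exp_neg_le_exp_neg_one d).trans (exp_neg_one_lt_half.le.trans (by norm_num))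

lemma mul_exp_neg_le_one_sub_exp_neg (d : ℝ) : d * exp (-d) ≤ 1 - exp (-d) := by
  have h := mul_le_mul_of_nonneg_right (add_one_le_exp d) (exp_pos (-d)).le
  rw [← exp_add, add_neg_cancel, exp_zero] at h
  linarith

lemma lt_two_div_of_lt_mul_exp_neg {B d : ℝ} (hB : 0 < B) (hd : 0 < d) (h : B < d * exp (-d)) :
    d < 2 / B := by
  have hexp : d ^ 2 / 2 ≤ exp d := by
    simpa using pow_div_factorial_le_exp d hd.le 2
  have h' : d * exp (-d) * exp d = d := by rw [mul_assoc, ← exp_add]; simp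
  rw [lt_div_iff₀ hB]
  nlinarith [mul_lt_mul_of_pos_left h hd, exp_pos (-d)]

lemma mul_klBer_mul_div_le {α s d k δ : ℝ} (hα0 : 0 ≤ α) (hα1 : α < 1) (hs0 : 0 < s)
    (hs1 : s < 1) (hd : 0 < d) (hk : 8 * d ≤ k) (hδ : δ ≤ s * (1 - s) / 4) :
    k * klBer (α * d / k) (s * d / k) ≤ (1 - δ) * (d * klBer α s) := by
  have hk0 : 0 < k := by linarith
  have ht : d / k ≤ 1 / 8 := by rw [div_le_iff₀ hk0]; linarith
  have h := klBer_mul_le hα0 hα1 hs0 hs1 (div_pos hd hk0) ht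
  rw [← mul_div_assoc, ← mul_div_assoc] at h
  calc k * klBer (α * d / k) (s * d / k)
      ≤ k * ((1 - s * (1 - s) / 4) * (d / k * klBer α s)) := mul_le_mul_of_nonneg_left h hk0.le
    _ = (1 - s * (1 - s) / 4) * (d * klBer α s) := by field_simp
    _ ≤ (1 - δ) * (d * klBer α s) := by
      have := klBer_nonneg hα0 hα1.le hs0 hs1
      gcongr

lemma mul_klBer_mul_div_le_neg_log {β c d k δ : ℝ} (hβ0 : 0 < β) (hβc : β ≤ c) (hc1 : c < 1)
    (hd : 0 < d) (hk : 8 * d ≤ k) (hδ : δ ≤ c * (1 - c) / 4) :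
    k * klBer (β * d / k) (c * d / k) ≤ (1 - δ) * (-d * log (1 - c)) := by
  have hk0 : 0 < k := by linarith
  have hcd : c * d / k < 1 := (div_lt_one hk0).2 (by nlinarith)
  calc k * klBer (β * d / k) (c * d / k) ≤ k * klBer (0 * d / k) (c * d / k) := by
        rw [zero_mul, zero_div]
        gcongr
        exact klBer_le_klBer_zero (by positivity) (by gcongr) hcd
    _ ≤ (1 - δ) * (d * klBer 0 c) :=
        mul_klBer_mul_div_le le_rfl one_pos (hβ0.trans_le hβc) hc1 hd hk hδ
    _ = (1 - δ) * (-d * log (1 - c)) := by rw [klBer_zero_left]; ring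

lemma mul_klBer_mul_div_pos {r s d k : ℝ} (hr0 : 0 ≤ r) (hs0 : 0 < s) (hrs : r ≠ s) (hd : 0 < d)
    (hk : 0 < k) (hr1 : r * d ≤ k) (hs1 : s * d < k) : 0 < k * klBer (r * d / k) (s * d / k) := by
  refine mul_pos hk (klBer_pos (by positivity) ((div_le_one hk).2 hr1) (by positivity)
    ((div_lt_one hk).2 hs1) ?_)
  exact fun h => hrs (mul_right_cancel₀ hd.ne' ((div_left_inj' hk.ne').1 h))

lemma mul_one_div_le_mul_one_div {a b X Y δ : ℝ} (ha : 0 ≤ a) (hab : a ≤ b) (hX : 0 < X)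
    (hδ : δ < 1) (hXY : X ≤ (1 - δ) * Y) : a * (1 / Y) ≤ (1 - δ) * (b * (1 / X)) := by
  have hY : 0 < Y := pos_of_mul_pos_right (hX.trans_le hXY) (by linarith)
  rw [mul_one_div, mul_one_div, ← mul_div_assoc, div_le_div_iff₀ hY hX]
  nlinarith [mul_le_mul_of_nonneg_left hXY ha, mul_le_mul_of_nonneg_right hab hY.le]

section ZChannel

variable {θ q : ℝ}

lemma ddSetZ_nonempty (hq1 : q < 1) : (ddSetZ θ q).Nonempty :=
  ⟨_, 1, q + exp (-1) * (1 - q) / 2, one_pos,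
    ⟨by nlinarith [exp_pos (-1)], by nlinarith [exp_pos (-1)]⟩, rfl⟩

lemma ddSetZBer_nonempty (hq1 : q < 1) (hθ0 : 0 < θ) (k : ℕ) :
    (ddSetZBer θ q k).Nonempty :=
  ⟨_, θ / 2, 1, q + exp (-1) * (1 - q) / 2, exp (-1) * (1 - q) / 2, by linarith, by linarith,
    one_pos, ⟨by nlinarith [exp_pos (-1)], by nlinarith [exp_pos (-1)]⟩,
    ⟨by nlinarith [exp_pos (-1)], by nlinarith [exp_pos (-1)]⟩, rfl⟩

lemma le_of_mem_ddSetZ (hq0 : 0 < q) (hq1 : q < 1) (hθ0 : 0 < θ) (hθ1 : θ < 1) {x : ℝ}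
    (hx : x ∈ ddSetZ θ q) : θ / (1 - θ) * (q / (1 - q)) ≤ x := by
  obtain ⟨d, α, hd, -, rfl⟩ := hx
  have hc0 : 0 < exp (-d) * (1 - q) := mul_pos (exp_pos _) (by linarith)
  have hc1 : exp (-d) * (1 - q) ≤ 1 - q :=
    mul_le_of_le_one_left (by linarith) (exp_le_one_iff.2 (by linarith))
  have hX : 0 < -d * log (1 - exp (-d) * (1 - q)) := by
    have := log_neg (by linarith) (by linarith : 1 - exp (-d) * (1 - q) < 1)
    nlinarith
  have hXle : -d * log (1 - exp (-d) * (1 - q)) ≤ (1 - q) / q := by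
    have h := mul_le_mul_of_nonneg_left (neg_log_one_sub_le_div hc0.le hq0 (by linarith)) hd.le
    have := mul_exp_neg_le_one d
    calc -d * log (1 - exp (-d) * (1 - q)) ≤ d * (exp (-d) * (1 - q) / q) := by linarith
      _ = d * exp (-d) * ((1 - q) / q) := by ring
      _ ≤ (1 - q) / q := mul_le_of_le_one_left (by positivity) this
  have h := one_div_le_one_div_of_le hX hXle
  rw [one_div_div] at h
  exact (mul_le_mul_of_nonneg_left h (div_nonneg hθ0.le (by linarith))).trans (le_max_right _ _)

lemma mul_klBer_mul_div_le_mul_exp_neg (hq0 : 0 < q) (hq1 : q < 1) {d β : ℝ} {k : ℕ}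
    (hd : 0 < d) (hk : 1 ≤ k) (hβ : β ∈ Ioo 0 (exp (-d) * (1 - q))) :
    k * klBer (β * d / k) (exp (-d) * (1 - q) * d / k) ≤ (1 - q) / q * (d * exp (-d)) := by
  have hk0 : (0 : ℝ) < k := by exact_mod_cast hk
  have hcd : exp (-d) * (1 - q) * d / k ≤ 1 - q := by
    rw [div_le_iff₀ hk0]
    have hk1 : (1 : ℝ) ≤ k := by exact_mod_cast hk
    nlinarith [mul_exp_neg_le_one d]
  have h : klBer (β * d / k) (exp (-d) * (1 - q) * d / k) ≤
      -log (1 - exp (-d) * (1 - q) * d / k) := (klBer_le_klBer_zero (by have := hβ.1; positivity)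
    (by gcongr; exact hβ.2.le) (by linarith)).trans_eq (klBer_zero_left _)
  calc k * klBer (β * d / k) (exp (-d) * (1 - q) * d / k)
      ≤ k * ((exp (-d) * (1 - q) * d / k) / q) :=
        mul_le_mul_of_nonneg_left (h.trans (neg_log_one_sub_le_div (by positivity) hq0 hcd)) hk0.le
    _ = (1 - q) / q * (d * exp (-d)) := by field_simp

lemma div_le_one_div_mul_klBer_of_mul_exp_neg_le (hq0 : 0 < q) (hq1 : q < 1) {B d β : ℝ}
    {k : ℕ} (hB : 0 < B) (hd : 0 < d) (hk : 1 ≤ k) (hβ : β ∈ Ioo 0 (exp (-d) * (1 - q)))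
    (hsmall : d * exp (-d) ≤ B) :
    q / ((1 - q) * B) ≤ 1 / (k * klBer (β * d / k) (exp (-d) * (1 - q) * d / k)) := by
  have hk1 : (1 : ℝ) ≤ k := by exact_mod_cast hk
  have hc0 : 0 < exp (-d) * (1 - q) := mul_pos (exp_pos _) (by linarith)
  have hcd : exp (-d) * (1 - q) * d < 1 := by nlinarith [mul_exp_neg_le_one d]
  have hX : 0 < k * klBer (β * d / k) (exp (-d) * (1 - q) * d / k) :=
    mul_klBer_mul_div_pos hβ.1.le hc0 hβ.2.ne hd (by positivity) (by nlinarith [hβ.2]) (by linarith)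
  have hU := (mul_klBer_mul_div_le_mul_exp_neg hq0 hq1 hd hk hβ).trans
    (mul_le_mul_of_nonneg_left hsmall (div_nonneg (by linarith) hq0.le))
  calc q / ((1 - q) * B) = 1 / ((1 - q) / q * B) := by field_simp
    _ ≤ _ := one_div_le_one_div_of_le hX hU

lemma quarter_mul_one_sub_ge_of_lt_mul_exp_neg (hq0 : 0 < q) (hq1 : q < 1) {B d : ℝ}
    (hB : 0 < B) (hlarge : B < d * exp (-d)) :
    q * (1 - q) * B ^ 2 / 8 ≤ q * (1 - q) / 4 ∧
    q * (1 - q) * B ^ 2 / 8 ≤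
      (exp (-d) + (1 - exp (-d)) * q) * (1 - (exp (-d) + (1 - exp (-d)) * q)) / 4 ∧
    q * (1 - q) * B ^ 2 / 8 ≤ exp (-d) * (1 - q) * (1 - exp (-d) * (1 - q)) / 4 := by
  have hd : 0 < d := pos_of_mul_pos_left (hB.trans hlarge) (exp_pos _).le
  have hB1 : B < 1 := hlarge.trans_le (mul_exp_neg_le_one d)
  have hqq : 0 < q * (1 - q) := mul_pos hq0 (by linarith)
  have hBB : q * (1 - q) * B ^ 2 ≤ q * (1 - q) * B :=
    mul_le_mul_of_nonneg_left (by nlinarith) hqq.le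
  have hexp1 : exp (-d) < 1 := exp_lt_one_iff.2 (by linarith)
  refine ⟨?_, ?_, ?_⟩
  · nlinarith [mul_le_of_le_one_right hqq.le hB1.le]
  · have h : q * (1 - q) * B ≤
        (exp (-d) + (1 - exp (-d)) * q) * (1 - (exp (-d) + (1 - exp (-d)) * q)) := by
      rw [show 1 - (exp (-d) + (1 - exp (-d)) * q) = (1 - q) * (1 - exp (-d)) by ring, mul_assoc]
      have := hlarge.trans_le (mul_exp_neg_le_one_sub_exp_neg d)
      gcongr
      nlinarith [exp_pos (-d)]
    nlinarith
  · have hexpB : B ^ 2 / 2 < exp (-d) := by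
      have hd2 := lt_two_div_of_lt_mul_exp_neg hB hd hlarge
      rw [lt_div_iff₀ hB] at hd2
      nlinarith [exp_pos (-d)]
    have h1c : q ≤ 1 - exp (-d) * (1 - q) := by nlinarith
    have := mul_le_mul (mul_le_mul_of_nonneg_right hexpB.le (by linarith : 0 ≤ 1 - q)) h1c
      hq0.le (by positivity)
    nlinarith

lemma ddSetZBer_large_or_gap (hq0 : 0 < q) (hq1 : q < 1) (hθ0 : 0 < θ) (hθ1 : θ < 1) {B : ℝ}
    (hB : 0 < B) {k : ℕ} (hk : 16 / B ≤ k) {x : ℝ} (hx : x ∈ ddSetZBer θ q k) :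
    θ / (1 - θ) * (q / ((1 - q) * B)) ≤ x ∨
      ∃ y ∈ ddSetZ θ q, y ≤ (1 - q * (1 - q) * B ^ 2 / 8) * x := by
  obtain ⟨ζ, d, α, β, hζ0, hζθ, hd, ⟨hαq, hαs⟩, ⟨hβ0, hβc⟩, rfl⟩ := hx
  have hk0 : (0 : ℝ) < k := (div_pos (by norm_num) hB).trans_le hk
  have hpref : 0 ≤ θ / (1 - θ) := div_nonneg hθ0.le (by linarith)
  rcases le_or_gt (d * exp (-d)) B with hsmall | hlarge
  · left
    have hk1 : 1 ≤ k := Nat.one_le_iff_ne_zero.2 (by rintro rfl; simp at hk0)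
    exact (mul_le_mul_of_nonneg_left (div_le_one_div_mul_klBer_of_mul_exp_neg_le hq0 hq1 hB hd
      hk1 ⟨hβ0, hβc⟩ hsmall) hpref).trans (le_max_right _ _)
  right
  refine ⟨_, ⟨d, α, hd, ⟨hαq, hαs⟩, rfl⟩, ?_⟩
  obtain ⟨hδ1, hδ2, hδ3⟩ := quarter_mul_one_sub_ge_of_lt_mul_exp_neg hq0 hq1 hB hlarge
  set δ := q * (1 - q) * B ^ 2 / 8
  set s := exp (-d) + (1 - exp (-d)) * q
  set c := exp (-d) * (1 - q)
  have hdk : 8 * d ≤ k := by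
    have := lt_two_div_of_lt_mul_exp_neg hB hd hlarge
    have : 8 * (2 / B) = 16 / B := by ring
    linarith
  have hδ : δ < 1 := by
    have : q * (1 - q) < 1 := by nlinarith
    linarith
  have hexp1 : exp (-d) < 1 := exp_lt_one_iff.2 (by linarith)
  have hc0 : 0 < c := mul_pos (exp_pos _) (by linarith)
  have hc1 : c < 1 := by nlinarith
  have hs0 : 0 < s := by linarith
  have hs1 : s < 1 := by nlinarith
  have hα0 : 0 ≤ α := by linarith
  have hα1 : α < 1 := by linarith
  have hlt {r : ℝ} (hr : r < 1) : r * d < k := (mul_lt_of_lt_one_left hd hr).trans_le (by linarith)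
  have h1 := mul_one_div_le_mul_one_div hpref le_rfl
    (mul_klBer_mul_div_pos hα0 hq0 hαq.ne' hd hk0 (hlt hα1).le (hlt hq1))
    hδ (mul_klBer_mul_div_le hα0 hα1 hq0 hq1 hd hdk hδ1)
  have h2 := mul_one_div_le_mul_one_div zero_le_one
    ((one_le_div (by linarith)).2 (by linarith : 1 - θ ≤ 1 - ζ))
    (mul_klBer_mul_div_pos hα0 hs0 hαs.ne hd hk0 (hlt hα1).le (hlt hs1))
    hδ (mul_klBer_mul_div_le hα0 hα1 hs0 hs1 hd hdk hδ2)
  rw [one_mul] at h2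
  have hX3 := mul_klBer_mul_div_le_neg_log hβ0 hβc.le hc1 hd hdk hδ3
  have h3 := mul_one_div_le_mul_one_div hpref le_rfl
    (mul_klBer_mul_div_pos hβ0.le hc0 hβc.ne hd hk0 (hlt (by linarith)).le (hlt hc1)) hδ hX3
  rw [mul_max_of_nonneg _ _ (by linarith), mul_max_of_nonneg _ _ (by linarith)]
  exact max_le_max (max_le_max h1 h2) h3

lemma exists_sInf_ddSetZ_add_le (hq0 : 0 < q) (hq1 : q < 1) (hθ0 : 0 < θ) (hθ1 : θ < 1) :
    ∃ ε > 0, ∃ K : ℕ, ∀ k ≥ K, ∀ x ∈ ddSetZBer θ q k, sInf (ddSetZ θ q) + ε ≤ x := by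
  set m := sInf (ddSetZ θ q)
  set L := θ / (1 - θ) * (q / (1 - q))
  have hL : 0 < L := mul_pos (div_pos hθ0 (by linarith)) (div_pos hq0 (by linarith))
  have hbdd : BddBelow (ddSetZ θ q) := ⟨L, fun x => le_of_mem_ddSetZ hq0 hq1 hθ0 hθ1⟩
  have hLm : L ≤ m := le_csInf (ddSetZ_nonempty hq1) fun x => le_of_mem_ddSetZ hq0 hq1 hθ0 hθ1
  obtain ⟨M, hM⟩ := ddSetZ_nonempty (θ := θ) hq1
  have hmM : m ≤ M := csInf_le hbdd hM
  set B := L / (M + 1)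
  have hB : 0 < B := div_pos hL (by linarith)
  have hB1 : B < 1 := (div_lt_one (by linarith)).2 (by linarith)
  have hBM : θ / (1 - θ) * (q / ((1 - q) * B)) = M + 1 := by
    have : 1 - θ ≠ 0 := by linarith
    have : 1 - q ≠ 0 := by linarith
    have : M + 1 ≠ 0 := by linarith
    simp only [B, L]
    field_simp
  set δ := q * (1 - q) * B ^ 2 / 8
  have hδ0 : 0 < δ := by
    have : 0 < 1 - q := by linarith
    positivity
  have hδ1 : δ < 1 := by
    show q * (1 - q) * B ^ 2 / 8 < 1
    have : q * (1 - q) ≤ 1 / 4 := by nlinarith [sq_nonneg (2 * q - 1)]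
    nlinarith [mul_le_mul this (by nlinarith : B ^ 2 ≤ 1) (sq_nonneg B) (by norm_num)]
  refine ⟨min 1 (δ * m), lt_min one_pos (by nlinarith), ⌈16 / B⌉₊, fun k hk x hx => ?_⟩
  have hk' : 16 / B ≤ k := (Nat.le_ceil _).trans (by exact_mod_cast hk)
  rcases ddSetZBer_large_or_gap hq0 hq1 hθ0 hθ1 hB hk' hx with hlarge | ⟨y, hy, hyx⟩
  · linarith [min_le_left 1 (δ * m)]
  · change y ≤ (1 - δ) * x at hyx
    have hmy : m ≤ y := csInf_le hbdd hy
    have hmx : m ≤ x := by nlinarith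
    nlinarith [min_le_right 1 (δ * m)]

end ZChannel

lemma tendsto_natCeil_rpow_atTop {θ : ℝ} (hθ : 0 < θ) :
    Tendsto (fun n : ℕ => ⌈(n : ℝ) ^ θ⌉₊) atTop atTop :=
  tendsto_nat_ceil_atTop.comp ((tendsto_rpow_atTop hθ).comp tendsto_natCast_atTop_atTop)

lemma eventually_natCeil_rpow_lt {θ : ℝ} (hθ0 : 0 < θ) (hθ1 : θ < 1) :
    ∀ᶠ n : ℕ in atTop, (⌈(n : ℝ) ^ θ⌉₊ : ℝ) < n := by
  filter_upwards [((tendsto_rpow_atTop (sub_pos.2 hθ1)).comp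
    tendsto_natCast_atTop_atTop).eventually_ge_atTop 2, eventually_gt_atTop 0] with n hn hn0
  have hn0 : (0 : ℝ) < n := by exact_mod_cast hn0
  have h1 : 1 ≤ (n : ℝ) ^ θ := one_le_rpow (by exact_mod_cast hn0) hθ0.le
  calc (⌈(n : ℝ) ^ θ⌉₊ : ℝ) < (n : ℝ) ^ θ + 1 := Nat.ceil_lt_add_one (by positivity)
    _ ≤ 2 * (n : ℝ) ^ θ := by linarith
    _ ≤ (n : ℝ) ^ (1 - θ) * (n : ℝ) ^ θ := mul_le_mul_of_nonneg_right hn (by positivity)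
    _ = n := by rw [← rpow_add hn0, sub_add_cancel, rpow_one]

/-- **Constant-column strictly beats Bernoulli for DD on the Z channel**
(Proposition 2.16).  For all sufficiently large `n`, `m_DD^Ber(n,θ,0,q) > m_DD(n,θ,0,q)`. -/
theorem dd_Bernoulli_gt_constantColumn_Z
    (q θ : ℝ) (hq0 : 0 < q) (hq1 : q < 1) (hθ0 : 0 < θ) (hθ1 : θ < 1) :
    ∀ᶠ n : ℕ in atTop, mDDZ n θ q < mDDZBer n θ q := by
  obtain ⟨ε, hε, K, hK⟩ := exists_sInf_ddSetZ_add_le hq0 hq1 hθ0 hθ1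
  filter_upwards [(tendsto_natCeil_rpow_atTop hθ0).eventually_ge_atTop (max K 1),
    eventually_natCeil_rpow_lt hθ0 hθ1] with n hk hkn
  have hk0 : (0 : ℝ) < ⌈(n : ℝ) ^ θ⌉₊ := by exact_mod_cast (le_of_max_le_right hk)
  have hgap := (lt_add_of_pos_right _ hε).trans_le
    (le_csInf (ddSetZBer_nonempty hq1 hθ0 _) (hK _ (le_of_max_le_left hk)))
  exact mul_lt_mul_of_pos_right hgap (mul_pos hk0 (log_pos ((one_lt_div hk0).2 hkn)))

end
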